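/- arXiv:1309.7826 — 7 statements merged into one kernel-verified Lean document; each statement's English description precedes it below -/
import Mathlib

section
/- The function G₁ : [1/4, 1) → ℝ assigning to each w the unique positive real root of f₁(x) = x³ − (w/(1−w))x² − (w/(1−w))x − (w/(1−w)) is strictly increasing on [1/4, 1). -/
theorem G1_strictMono (w₁ w₂ : ℝ) (h₁ : 1/4 ≤ w₁) (h₂ : w₂ < 1) (hlt : w₁ < w₂)
    (g₁ g₂ : ℝ) (hg₁ : 0 < g₁)
    (hr₁ : g₁^3 - (w₁/(1-w₁))*g₁^2 - (w₁/(1-w₁))*g₁ - (w₁/(1-w₁)) = 0)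
    (hg₂ : 0 < g₂)
    (hr₂ : g₂^3 - (w₂/(1-w₂))*g₂^2 - (w₂/(1-w₂))*g₂ - (w₂/(1-w₂)) = 0) :
    g₁ < g₂ := by
  have h1w₁ : (0:ℝ) < 1 - w₁ := by linarith
  have h1w₂ : (0:ℝ) < 1 - w₂ := by linarith
  have q₁pos : (0:ℝ) < g₁^2 + g₁ + 1 := by positivity
  have q₂pos : (0:ℝ) < g₂^2 + g₂ + 1 := by positivity
  have e₁ : (w₁/(1-w₁)) * (g₁^2 + g₁ + 1) = g₁^3 := by linear_combination -hr₁
  have e₂ : (w₂/(1-w₂)) * (g₂^2 + g₂ + 1) = g₂^3 := by linear_combination -hr₂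
  have key : w₁/(1-w₁) < w₂/(1-w₂) := by
    rw [div_lt_div_iff₀ h1w₁ h1w₂]; nlinarith
  have key2 : g₁^3 / (g₁^2 + g₁ + 1) < g₂^3 / (g₂^2 + g₂ + 1) := by
    rw [← e₁, ← e₂, mul_div_assoc, mul_div_assoc,
      div_self (ne_of_gt q₁pos), div_self (ne_of_gt q₂pos), mul_one, mul_one]
    exact key
  rw [div_lt_div_iff₀ q₁pos q₂pos] at key2
  by_contra h
  push_neg at h
  have hd : 0 ≤ g₁ - g₂ := by linarith
  nlinarith [mul_nonneg hd (mul_nonneg (mul_nonneg hg₁.le hg₁.le) (mul_nonneg hg₂.le hg₂.le)),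
    mul_nonneg (mul_nonneg hd (mul_nonneg hg₁.le hg₂.le)) (by linarith : (0:ℝ) ≤ g₁ + g₂),
    mul_nonneg hd (by nlinarith : (0:ℝ) ≤ g₁^2 + g₁*g₂ + g₂^2)]
end

section
/- For every real number w with 1/4 ≤ w ≤ 1/2, the quartic polynomial f₂₁(x) = x⁴ − (w/(1−w))x³ − (w/(1−w))x² + (w/(1−w))²·x − w/(1−w)² has exactly one positive real root. -/
set_option maxHeartbeats 1000000 in
theorem unique_positive_root_f21 (w : ℝ) (hw1 : 1/4 ≤ w) (hw2 : w ≤ 1/2) :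
    ∃! x : ℝ, 0 < x ∧
      x^4 - (w/(1-w))*x^3 - (w/(1-w))*x^2 + (w/(1-w))^2*x - w/(1-w)^2 = 0 := by
  have h1w : (0:ℝ) < 1 - w := by linarith
  obtain ⟨t, ht⟩ : ∃ t : ℝ, t = w / (1 - w) := ⟨_, rfl⟩
  have ht1 : 1/3 ≤ t := by
    rw [ht, le_div_iff₀ h1w]; linarith
  have ht2 : t ≤ 1 := by
    rw [ht, div_le_iff₀ h1w]; linarith
  have hc : w / (1-w)^2 = t + t^2 := by
    rw [ht]; field_simp; ring
  obtain ⟨g, hg⟩ : ∃ g : ℝ → ℝ, g = fun x => x^4 - t*x^3 - t*x^2 + t^2*x - (t + t^2) := ⟨_, rfl⟩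
  have hstmt : ∀ x : ℝ, x^4 - (w/(1-w))*x^3 - (w/(1-w))*x^2 + (w/(1-w))^2*x - w/(1-w)^2 = g x := by
    intro x; simp only [hg]; rw [← ht, hc]
  -- g is negative on (0,1)
  have hneg : ∀ x : ℝ, 0 < x → x < 1 → g x < 0 := by
    intro x hx0 hx1
    simp only [hg]
    nlinarith [mul_nonneg (sub_nonneg.2 ht1) (sub_nonneg.2 (le_of_lt hx1)),
      mul_pos (sub_pos.2 hx1) (by nlinarith : (0:ℝ) < 9*x^3+6*x^2+3*x+4),
      mul_nonneg (mul_nonneg (sub_nonneg.2 ht1) (by linarith : (0:ℝ) ≤ t + 1/3)) (sub_nonneg.2 (le_of_lt hx1)),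
      sq_nonneg x, sq_nonneg (x-1)]
  -- derivative
  have hd : ∀ x : ℝ, HasDerivAt g (4*x^3 - t*(3*x^2) - t*(2*x) + t^2) x := by
    intro x
    rw [hg]
    have h4 : HasDerivAt (fun x : ℝ => x^4) (4*x^3) x := by
      simpa using hasDerivAt_pow 4 x
    have h3 : HasDerivAt (fun x : ℝ => t*x^3) (t*(3*x^2)) x := by
      simpa using (hasDerivAt_pow 3 x).const_mul t
    have h2 : HasDerivAt (fun x : ℝ => t*x^2) (t*(2*x)) x := by
      simpa using (hasDerivAt_pow 2 x).const_mul t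
    have h1 : HasDerivAt (fun x : ℝ => t^2*x) (t^2) x := by
      simpa using (hasDerivAt_id x).const_mul (t^2)
    simpa using (((h4.sub h3).sub h2).add h1).sub_const (t + t^2)
  have hcont : Continuous g := by
    simp only [hg]; continuity
  -- g strictly monotone on [1, ∞)
  have hmono : StrictMonoOn g (Set.Ici (1:ℝ)) := by
    have : ∀ x ∈ interior (Set.Ici (1:ℝ)), 0 < deriv g x := by
      intro x hx
      rw [interior_Ici] at hx
      have hx1 : (1:ℝ) < x := hx
      rw [(hd x).deriv]
      nlinarith [mul_pos (sub_pos.2 hx1) (by nlinarith : (0:ℝ) < 4*x^2+x-1),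
        mul_nonneg (sub_nonneg.2 ht2) (by nlinarith : (0:ℝ) ≤ 3*x^2+2*x-1-t)]
    exact strictMonoOn_of_deriv_pos (convex_Ici 1) hcont.continuousOn this
  -- existence via IVT on [1,2]
  have hg1 : g 1 ≤ 0 := by simp only [hg]; nlinarith
  have hg2 : 0 < g 2 := by simp only [hg]; nlinarith
  have hivt : ∃ x ∈ Set.Icc (1:ℝ) 2, g x = 0 := by
    have := intermediate_value_Icc (by norm_num : (1:ℝ) ≤ 2) hcont.continuousOn
    have h0 : (0:ℝ) ∈ Set.Icc (g 1) (g 2) := ⟨hg1, le_of_lt hg2⟩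
    obtain ⟨x, hx, hgx⟩ := this h0
    exact ⟨x, hx, hgx⟩
  obtain ⟨x, ⟨hx1, hx2⟩, hgx⟩ := hivt
  refine ⟨x, ⟨by linarith, by rw [hstmt]; exact hgx⟩, ?_⟩
  rintro y ⟨hy0, hgy⟩
  rw [hstmt] at hgy
  have hy1 : (1:ℝ) ≤ y := by
    by_contra h
    push_neg at h
    exact absurd hgy (ne_of_lt (hneg y hy0 h))
  exact hmono.injOn hy1 hx1 (by rw [hgy, hgx])
end

section
/- For every real number w with 1/2 ≤ w < 1, the quartic polynomial f₂₂(x) = x⁴ − (w/(1−w))x³ − (w/(1−w))x² + (w/(1−w))x − w/(1−w)² has exactly one positive real root. -/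
/-!
Put `a = w/(1-w) > 0`. Since `1/(1-w) = 1 + a`, the constant term is `a + a²`, and
`f₂₂(x) = x³(x - a) - a(x² - x + 1) - a²`. This is negative for `0 < x ≤ a` and positive for
`x ≥ a + 1`, and its derivative exceeds `a(x - 1)² ≥ 0` on `(a, ∞)`; so the intermediate value
theorem gives a root in `(a, a + 1)` and strict monotonicity on `[a, ∞)` makes it the only positive
one.
-/

open Set

def quartic (a x : ℝ) : ℝ := x ^ 4 - a * x ^ 3 - a * x ^ 2 + a * x - (a + a ^ 2)

theorem f22_eq_quartic {w : ℝ} (hw : w ≠ 1) (x : ℝ) :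
    x^4 - (w/(1-w))*x^3 - (w/(1-w))*x^2 + (w/(1-w))*x - w/(1-w)^2 = quartic (w/(1-w)) x := by
  have h : (1 - w) ≠ 0 := sub_ne_zero.mpr hw.symm
  unfold quartic
  field_simp
  ring

section

variable {a x : ℝ}

theorem quartic_neg (ha : 0 < a) (hx : 0 < x) (hxa : x ≤ a) : quartic a x < 0 := by
  have hcube : x ^ 3 * (x - a) ≤ 0 :=
    mul_nonpos_of_nonneg_of_nonpos (by positivity) (sub_nonpos.mpr hxa)
  have hsq : 0 < a * (x ^ 2 - x + 1) := mul_pos ha (by nlinarith [sq_nonneg (x - 1)])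
  unfold quartic
  nlinarith [sq_nonneg a]

theorem quartic_pos (ha : 0 ≤ a) (hx : a + 1 ≤ x) : 0 < quartic a x := by
  have hx0 : 0 ≤ x := by linarith
  have hcube : x ^ 2 * (a + 1) ≤ x ^ 3 := by
    nlinarith [mul_le_mul_of_nonneg_left hx (sq_nonneg x)]
  have hsq : (a + 1) ^ 2 ≤ x ^ 2 := pow_le_pow_left₀ (by linarith) hx 2
  unfold quartic
  nlinarith [mul_le_mul_of_nonneg_left hcube hx0, mul_le_mul_of_nonneg_left hx ha]

theorem hasDerivAt_quartic (a x : ℝ) :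
    HasDerivAt (quartic a) (4 * x ^ 3 - 3 * a * x ^ 2 - 2 * a * x + a) x := by
  have h := ((((hasDerivAt_pow 4 x).sub ((hasDerivAt_pow 3 x).const_mul a)).sub
    ((hasDerivAt_pow 2 x).const_mul a)).add ((hasDerivAt_id x).const_mul a)).sub_const (a + a ^ 2)
  exact h.congr_deriv (by push_cast; ring)

theorem continuous_quartic (a : ℝ) : Continuous (quartic a) := by
  unfold quartic
  fun_prop

theorem strictMonoOn_quartic (ha : 0 ≤ a) : StrictMonoOn (quartic a) (Ici a) := by
  refine strictMonoOn_of_deriv_pos (convex_Ici a) (continuous_quartic a).continuousOn ?_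
  intro t ht
  rw [interior_Ici, mem_Ioi] at ht
  rw [(hasDerivAt_quartic a t).deriv]
  -- `t²(4t - 3a) > a t²` on `t > a`, and `a t² - 2 a t + a = a (t - 1)²`.
  have hlead : a * t ^ 2 < t ^ 2 * (4 * t - 3 * a) := by
    nlinarith [mul_pos (pow_pos (ha.trans_lt ht) 2) (sub_pos.mpr ht)]
  nlinarith [mul_nonneg ha (sq_nonneg (t - 1))]

theorem existsUnique_pos_quartic_eq_zero (ha : 0 < a) : ∃! x, 0 < x ∧ quartic a x = 0 := by
  have hroot_gt : ∀ x, 0 < x → quartic a x = 0 → a < x := fun x hx hroot =>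
    lt_of_not_ge fun hxa => (quartic_neg ha hx hxa).ne hroot
  obtain ⟨x, ⟨hax, -⟩, hroot⟩ :=
    intermediate_value_Ioo (by linarith) (continuous_quartic a).continuousOn
      ⟨quartic_neg ha ha le_rfl, quartic_pos ha.le le_rfl⟩
  refine ⟨x, ⟨ha.trans hax, hroot⟩, fun y ⟨hy, hyroot⟩ => ?_⟩
  exact (strictMonoOn_quartic ha.le).injOn (hroot_gt y hy hyroot).le hax.le
    (hyroot.trans hroot.symm)

end

theorem unique_positive_root_f22 (w : ℝ) (hw1 : 1/2 ≤ w) (hw2 : w < 1) :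
    ∃! x : ℝ, 0 < x ∧
      x^4 - (w/(1-w))*x^3 - (w/(1-w))*x^2 + (w/(1-w))*x - w/(1-w)^2 = 0 := by
  have ha : 0 < w / (1 - w) := div_pos (by linarith) (by linarith)
  simp only [f22_eq_quartic hw2.ne]
  exact existsUnique_pos_quartic_eq_zero ha
end

section
/- For every w with 1/4 < w ≤ 1/2, the unique positive root G₂₁(w) of f₂₁ is strictly smaller than the unique positive root G₁(w) of f₁, i.e., G₂(w) < G₁(w) in this range. -/
theorem G21_lt_G1 (w : ℝ) (hw1 : 1/4 < w) (hw2 : w ≤ 1/2)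
    (g₁ g₂ : ℝ) (hg₁ : 0 < g₁)
    (hr₁ : g₁^3 - (w/(1-w))*g₁^2 - (w/(1-w))*g₁ - (w/(1-w)) = 0)
    (hg₂ : 0 < g₂)
    (hr₂ : g₂^4 - (w/(1-w))*g₂^3 - (w/(1-w))*g₂^2 + (w/(1-w))^2*g₂ - w/(1-w)^2 = 0) :
    g₂ < g₁ := by
  have hw : (0:ℝ) < 1 - w := by linarith
  set a := w/(1-w) with ha
  have ha3 : 1/3 < a := by
    rw [ha, lt_div_iff₀ hw]; linarith
  have ha1 : a ≤ 1 := by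
    rw [ha, div_le_one hw]; linarith
  have ha0 : 0 < a := by linarith
  have hkey : w/(1-w)^2 = a + a^2 := by
    rw [ha]; field_simp; ring
  rw [hkey] at hr₂
  -- g₂ > 1
  have hg2_1 : 1 < g₂ := by
    by_contra h
    push_neg at h
    nlinarith [sq_nonneg g₂, sq_nonneg (g₂ - 1), mul_nonneg (le_of_lt hg₂) (sq_nonneg (g₂-1)),
      mul_nonneg (mul_nonneg (le_of_lt hg₂) (le_of_lt hg₂)) (sub_nonneg.mpr h),
      mul_nonneg (sub_nonneg.mpr h) (sq_nonneg g₂),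
      mul_nonneg (mul_nonneg ha0.le (sub_nonneg.mpr h)) (sq_nonneg g₂),
      mul_pos ha0 hg₂, mul_nonneg ha0.le (sq_nonneg (g₂-1))]
  -- g₁ > 1
  have hg1_1 : 1 < g₁ := by
    nlinarith [sq_nonneg (g₁ - 1), mul_pos hg₁ hg₁, sq_nonneg g₁,
      mul_nonneg (le_of_lt hg₁) (sq_nonneg (g₁-1))]
  -- f₁(g₂) < 0
  have hf1g2 : g₂^3 - a*g₂^2 - a*g₂ - a < 0 := by
    have hid : g₂ * (g₂^3 - a*g₂^2 - a*g₂ - a) = (a + a^2)*(1 - g₂) := by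
      nlinarith [hr₂]
    have hrhs : (a + a^2)*(1 - g₂) < 0 := by nlinarith
    nlinarith [mul_pos hg₂ hg₂]
  by_contra h
  push_neg at h
  nlinarith [mul_nonneg (sub_nonneg.mpr h) (sq_nonneg g₂),
    mul_pos hg₁ hg₂, mul_pos (mul_pos hg₁ hg₂) hg₂,
    mul_nonneg (sub_nonneg.mpr h) (mul_pos hg₁ hg₂).le,
    mul_nonneg (sub_nonneg.mpr h) (sq_nonneg g₁),
    mul_nonneg (mul_nonneg ha0.le (sub_nonneg.mpr h)) hg₂.le,
    mul_nonneg ha0.le (sub_nonneg.mpr h)]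
end

section
/- For every w with 1/2 ≤ w < 1, the unique positive root G₂₂(w) of f₂₂ is strictly smaller than the unique positive root G₁(w) of f₁. -/
theorem G22_lt_G1 (w : ℝ) (hw1 : 1/2 ≤ w) (hw2 : w < 1)
    (g₁ g₂ : ℝ) (hg₁ : 0 < g₁)
    (hr₁ : g₁^3 - (w/(1-w))*g₁^2 - (w/(1-w))*g₁ - (w/(1-w)) = 0)
    (hg₂ : 0 < g₂)
    (hr₂ : g₂^4 - (w/(1-w))*g₂^3 - (w/(1-w))*g₂^2 + (w/(1-w))*g₂ - w/(1-w)^2 = 0) :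
    g₂ < g₁ := by
  have hw : (0:ℝ) < 1 - w := by linarith
  set a := w/(1-w) with ha_def
  have ha : 1 ≤ a := by
    rw [ha_def, le_div_iff₀ hw]; linarith
  have key : w/(1-w)^2 = a*(1+a) := by
    have h0 : (1-w) ≠ 0 := ne_of_gt hw
    rw [ha_def]
    field_simp
    ring_nf
  rw [key] at hr₂
  by_contra h
  push_neg at h
  -- g₁ > a
  have ha1 : a < g₁ := by nlinarith [mul_pos hg₁ hg₁]
  -- g₂ ≥ g₁ > a
  have ha2 : a < g₂ := lt_of_lt_of_le ha1 h
  -- f₁(g₂) ≥ 0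
  have hf1 : 0 ≤ g₂^3 - a*g₂^2 - a*g₂ - a := by
    nlinarith [mul_nonneg (sub_nonneg.mpr h) (mul_pos hg₂ (sub_pos.mpr ha2)).le,
      mul_nonneg (sub_nonneg.mpr h) (mul_pos hg₁ (sub_pos.mpr ha2)).le,
      mul_nonneg (sub_nonneg.mpr h) (sub_pos.mpr (lt_of_le_of_lt (le_trans ha (le_of_lt ha1)) (by nlinarith : g₁ < g₁^2))).le]
  -- identity: g₂ * f₁(g₂) = a*(1+a) - 2*a*g₂
  have hid : g₂ * (g₂^3 - a*g₂^2 - a*g₂ - a) = a*(1+a) - 2*a*g₂ := by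
    linear_combination hr₂
  nlinarith [mul_nonneg hg₂.le hf1]
end

section
/- For every w with 1/4 < w < 1, G₃(w) < G₂(w), where G₂(w) = G₂₁(w) for w ≤ 1/2 and G₂(w) = G₂₂(w) for w ≥ 1/2. -/
private lemma f3_neg (a x : ℝ) (ha : 1/3 < a) (hx : 0 < x) (hx1 : x ≤ 1) :
    x^5 - a*x^4 - a*x^3 + a^2*x^2 - a*(1+a) < 0 := by
  nlinarith [mul_nonneg hx.le (sub_nonneg.2 hx1), mul_nonneg (mul_nonneg hx.le hx.le) (sub_nonneg.2 hx1),
    sq_nonneg (x - a), sq_nonneg (x^2 - a), sq_nonneg (x^2 + x - 2*a), sq_nonneg (x^2 - x),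
    mul_pos hx hx, sq_nonneg (a - 1/2), sq_nonneg x]

private lemma f21_neg (a x : ℝ) (ha : 1/3 < a) (hx : 0 < x) (hx1 : x ≤ 1) :
    x^4 - a*x^3 - a*x^2 + a^2*x - a*(1+a) < 0 := by
  nlinarith [mul_nonneg hx.le (sub_nonneg.2 hx1), mul_nonneg (mul_nonneg hx.le hx.le) (sub_nonneg.2 hx1),
    sq_nonneg (x - a), sq_nonneg (x^2 - a), sq_nonneg (x^2 + x - 2*a), sq_nonneg (x^2 - x),
    mul_pos hx hx, sq_nonneg (a - 1/2), sq_nonneg x]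

private lemma f22_neg (a x : ℝ) (ha : 1 ≤ a) (hx : 0 < x) (hxa : x ≤ a) :
    x^4 - a*x^3 - a*x^2 + a*x - a*(1+a) < 0 := by
  nlinarith [mul_nonneg (mul_nonneg (mul_nonneg hx.le hx.le) hx.le) (sub_nonneg.2 hxa),
    mul_nonneg (by linarith : (0:ℝ) ≤ a) (sq_nonneg (2*x - 1))]

private lemma f21_mono (a x y : ℝ) (ha : a ≤ 1) (hx : 1 ≤ x) (hxy : x ≤ y) :
    x^4 - a*x^3 - a*x^2 + a^2*x ≤ y^4 - a*y^3 - a*y^2 + a^2*y := by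
  nlinarith [mul_nonneg (sub_nonneg.2 hxy) (mul_nonneg (sub_nonneg.2 ha) (by nlinarith : (0:ℝ) ≤ x^2+x*y+y^2+x+y-1-a)),
    mul_nonneg (sub_nonneg.2 hxy) (by nlinarith : (0:ℝ) ≤ (y-1)*(x^2+x*y+y^2-1) + x*(x-1)*(x+1))]

private lemma f22_mono (a x y : ℝ) (ha : 1 ≤ a) (hx : a ≤ x) (hxy : x ≤ y) :
    x^4 - a*x^3 - a*x^2 + a*x ≤ y^4 - a*y^3 - a*y^2 + a*y := by
  have h0x : (0:ℝ) ≤ x := by linarith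
  have h0y : (0:ℝ) ≤ y := by linarith
  have hxa : (0:ℝ) ≤ x - a := by linarith
  have hya : (0:ℝ) ≤ y - a := by linarith
  have hyx : (0:ℝ) ≤ y - x := by linarith
  nlinarith [mul_nonneg hyx (mul_nonneg (sq_nonneg x) hxa),
    mul_nonneg hyx (mul_nonneg (mul_nonneg h0x h0y) hxa),
    mul_nonneg hyx (mul_nonneg (sq_nonneg y) hxa),
    mul_nonneg hyx (mul_nonneg (sq_nonneg y) hya),
    mul_nonneg hyx (mul_nonneg (by linarith : (0:ℝ) ≤ a) (sq_nonneg (y-1))),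
    mul_nonneg hyx (mul_nonneg (by linarith : (0:ℝ) ≤ a) hyx)]

theorem G3_lt_G2 (w : ℝ) (hw1 : 1/4 < w) (hw2 : w < 1)
    (g₃ : ℝ) (hg₃ : 0 < g₃)
    (hr₃ : g₃^5 - (w/(1-w))*g₃^4 - (w/(1-w))*g₃^3 + (w^2/(1-w)^2)*g₃^2 - w/(1-w)^2 = 0) :
    (w ≤ 1/2 → ∀ g : ℝ, 0 < g →
      g^4 - (w/(1-w))*g^3 - (w/(1-w))*g^2 + (w/(1-w))^2*g - w/(1-w)^2 = 0 → g₃ < g) ∧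
    (1/2 ≤ w → ∀ g : ℝ, 0 < g →
      g^4 - (w/(1-w))*g^3 - (w/(1-w))*g^2 + (w/(1-w))*g - w/(1-w)^2 = 0 → g₃ < g) := by
  have h1w : (0:ℝ) < 1 - w := by linarith
  have h1w' : (1:ℝ) - w ≠ 0 := ne_of_gt h1w
  set a := w/(1-w) with ha_def
  have ha3 : 1/3 < a := by rw [ha_def, lt_div_iff₀ h1w]; linarith
  have ha0 : 0 < a := by linarith
  have hsq : w^2/(1-w)^2 = a^2 := by rw [ha_def]; field_simp
  have hc : w/(1-w)^2 = a*(1+a) := by rw [ha_def]; field_simp; ring_nf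
  rw [hsq, hc] at hr₃
  have hg31 : 1 < g₃ := by
    by_contra h
    push_neg at h
    have := f3_neg a g₃ ha3 hg₃ h
    linarith
  constructor
  · intro hw g hg hroot
    have ha1 : a ≤ 1 := by rw [ha_def, div_le_one h1w]; linarith
    rw [hc] at hroot
    by_contra hcon; push_neg at hcon
    rcases le_or_gt g 1 with h1 | h1
    · have := f21_neg a g ha3 hg h1
      linarith
    · have key : g₃*(g₃^4 - a*g₃^3 - a*g₃^2 + a^2*g₃ - a*(1+a)) = -(a*(1+a))*(g₃-1) := by
        linear_combination hr₃
      have hpos : 0 < a*(1+a)*(g₃-1) := by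
        apply mul_pos (by nlinarith) (by linarith)
      have hf21g3 : g₃^4 - a*g₃^3 - a*g₃^2 + a^2*g₃ - a*(1+a) < 0 := by
        nlinarith [key, mul_pos hg₃ hg₃]
      have hmono := f21_mono a g g₃ ha1 h1.le hcon
      linarith
  · intro hw g hg hroot
    have ha1 : 1 ≤ a := by rw [ha_def, le_div_iff₀ h1w]; linarith
    rw [hc] at hroot
    by_contra hcon; push_neg at hcon
    rcases le_or_gt g a with h1 | h1
    · have := f22_neg a g ha1 hg h1
      linarith
    · have key : g₃*(g₃^4 - a*g₃^3 - a*g₃^2 + a*g₃ - a*(1+a))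
          = -(a*(a-1)*g₃^2 + a*(1+a)*(g₃-1)) := by
        linear_combination hr₃
      have hpos : 0 < a*(a-1)*g₃^2 + a*(1+a)*(g₃-1) := by
        have h2 : 0 ≤ a*(a-1)*g₃^2 := mul_nonneg (mul_nonneg ha0.le (by linarith)) (sq_nonneg g₃)
        have h3 : 0 < a*(1+a)*(g₃-1) := by
          apply mul_pos (by nlinarith) (by linarith)
        linarith
      have hf22g3 : g₃^4 - a*g₃^3 - a*g₃^2 + a*g₃ - a*(1+a) < 0 := by
        nlinarith [key]
      have hmono := f22_mono a g g₃ ha1 h1.le hcon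
      linarith
end

section
/- For every w ∈ (0,1), the system of equalities α/((1−α)u) = −v + 1/(1−α) = ((1−α)u + α)/((1−α)(1−v)) with α = w has a solution (u,v) with u, v ∈ (0,1), provided 1/4 ≤ w < 1. -/
/-!
Put `c = 1 - w` and look for a solution with common value `1 / s`. The first equation gives
`u = w s / c`, the definition of the common value gives `v = 1 / c - 1 / s`, and the second
equation then reduces to the cubic `w (s³ + s² + s) = c`. It has a positive root by the
intermediate value theorem, and `u, v ∈ (0, 1)` amounts to `c < s < c / w`.
-/

lemma exists_pos_cubic_eq {y : ℝ} (hy : 0 < y) : ∃ s : ℝ, 0 < s ∧ s ^ 3 + s ^ 2 + s = y := by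
  have hcont : ContinuousOn (fun s : ℝ => s ^ 3 + s ^ 2 + s) (Set.Icc 0 y) := by fun_prop
  obtain ⟨s, ⟨hs, -⟩, hfs⟩ :=
    intermediate_value_Ioc hy.le hcont ⟨by simpa using hy, by nlinarith [pow_pos hy 3]⟩
  exact ⟨s, hs, hfs⟩

section

variable {w s : ℝ}

lemma mul_lt_one_sub_of_cubic_eq (hs : 0 < s) (hcubic : w * (s ^ 3 + s ^ 2 + s) = 1 - w) :
    w * s < 1 - w := by
  nlinarith [pow_pos hs 3, pow_pos hs 2]

-- Otherwise monotonicity gives `1 - w ≤ w ((1 - w)³ + (1 - w)² + (1 - w)) = (1 - w) - (1 - w)⁴`.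
lemma one_sub_lt_of_cubic_eq (hw0 : 0 < w) (hw1 : w < 1) (hs : 0 < s)
    (hcubic : w * (s ^ 3 + s ^ 2 + s) = 1 - w) : 1 - w < s := by
  by_contra! h
  have h1w : 0 < 1 - w := by linarith
  nlinarith [pow_pos h1w 4, pow_le_pow_left₀ hs.le h 3, pow_le_pow_left₀ hs.le h 2]

lemma uv_solution_of_cubic_eq (hw0 : 0 < w) (hw1 : w < 1) (hs : 0 < s)
    (hcubic : w * (s ^ 3 + s ^ 2 + s) = 1 - w) :
    let u := w * s / (1 - w)
    let v := 1 / (1 - w) - 1 / s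
    0 < u ∧ u < 1 ∧ 0 < v ∧ v < 1 ∧
      w / ((1 - w) * u) = -v + 1 / (1 - w) ∧
      -v + 1 / (1 - w) = ((1 - w) * u + w) / ((1 - w) * (1 - v)) := by
  intro u v
  have h1w : 0 < 1 - w := by linarith
  have hws := mul_lt_one_sub_of_cubic_eq hs hcubic
  have hcs := one_sub_lt_of_cubic_eq hw0 hw1 hs hcubic
  have hcommon : -v + 1 / (1 - w) = 1 / s := by simp only [v]; ring
  have hv : 1 - v = 1 / s - w / (1 - w) := by simp only [v]; field_simp; ring
  have hv1 : 0 < 1 - v := by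
    rw [hv, sub_pos, div_lt_div_iff₀ h1w hs]; nlinarith
  refine ⟨by positivity, (div_lt_one h1w).2 hws, ?_, by linarith, ?_, ?_⟩
  · rw [sub_pos, div_lt_div_iff₀ hs h1w]
    linarith
  · rw [hcommon]
    simp only [u]
    field_simp
  · rw [hcommon, eq_div_iff (mul_pos h1w hv1).ne', hv]
    simp only [u]
    field_simp
    linear_combination -hcubic

end

theorem uv_system_solvable (w : ℝ) (hw1 : 1/4 ≤ w) (hw2 : w < 1) :
    ∃ u v : ℝ, 0 < u ∧ u < 1 ∧ 0 < v ∧ v < 1 ∧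
      w/((1-w)*u) = -v + 1/(1-w) ∧
      -v + 1/(1-w) = ((1-w)*u + w)/((1-w)*(1-v)) := by
  have hw0 : 0 < w := by linarith
  obtain ⟨s, hs, hfs⟩ := exists_pos_cubic_eq (div_pos (sub_pos.2 hw2) hw0)
  have hcubic : w * (s ^ 3 + s ^ 2 + s) = 1 - w := by
    rw [hfs]; field_simp
  exact ⟨_, _, uv_solution_of_cubic_eq hw0 hw2 hs hcubic⟩
end
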